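/- Let F be a graph and let Q(F) be the graph obtained from a path u1u2u3u4 on 4 vertices by replacing u3 with a copy of F, every vertex of which is adjacent to both u2 and u4. If G is a finite connected Q(F)-free graph and M is a module of G, then at least one of the following holds: the subgraph of G induced by M is F-free; the neighbourhood N(M) is a clique-separator of modules of G; or every vertex of G lies in M or has a neighbour in M (i.e., N²(M) = ∅). -/

import Mathlib

open SimpleGraph

/-- `G` is `H`-free: no induced subgraph of `G` is isomorphic to `H`. -/
def IndFree {α β : Type*} (H : SimpleGraph α) (G : SimpleGraph β) : Prop :=
  ∀ s : Set β, ¬ Nonempty (H ≃g G.induce s)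

/-- The banner: a 4-cycle `0-1-2-3-0` together with a pendant vertex `4` adjacent to `0`. -/
def banner : SimpleGraph (Fin 5) :=
  SimpleGraph.fromEdgeSet {s(0,1), s(1,2), s(2,3), s(3,0), s(0,4)}

/-- The co-banner: the complement of the banner. -/
def coBanner : SimpleGraph (Fin 5) := bannerᶜ

/-- `2K₂`: the disjoint union of two edges. -/
def twoK2 : SimpleGraph (Fin 4) := SimpleGraph.fromEdgeSet {s(0,1), s(2,3)}

/-- `3K₁`: three pairwise nonadjacent vertices. -/
def threeK1 : SimpleGraph (Fin 3) := ⊥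

/-- The 5-wheel: a 5-cycle `0-1-2-3-4-0` plus a hub `5` adjacent to all cycle vertices. -/
def wheel5 : SimpleGraph (Fin 6) :=
  SimpleGraph.fromEdgeSet
    {s(0,1), s(1,2), s(2,3), s(3,4), s(4,0), s(5,0), s(5,1), s(5,2), s(5,3), s(5,4)}

/-- A nonempty set `M` is a module if every vertex outside `M` is adjacent to all
or to none of the vertices of `M`. -/
def IsModule {V : Type*} (G : SimpleGraph V) (M : Set V) : Prop :=
  M.Nonempty ∧ ∀ v ∉ M, (∀ u ∈ M, G.Adj v u) ∨ (∀ u ∈ M, ¬ G.Adj v u)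

/-- `X` is a clique-separator of modules in `G`. -/
def IsCliqueSeparatorOfModules {V : Type*} (G : SimpleGraph V) (X : Set V) : Prop :=
  (∃ (k : ℕ) (Xs : Fin k → Set V),
      (∀ i, IsModule G (Xs i)) ∧
      (∀ i j, i ≠ j → Disjoint (Xs i) (Xs j)) ∧
      (∀ i j, i ≠ j → ∀ u ∈ Xs i, ∀ v ∈ Xs j, G.Adj u v) ∧
      X = ⋃ i, Xs i) ∧
  (∃ A B : Set V, A ∪ B = Set.univ ∧ (A \ B).Nonempty ∧ (B \ A).Nonempty ∧
      (∀ a ∈ A \ B, ∀ b ∈ B \ A, ¬ G.Adj a b) ∧ A ∩ B = X)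

/-- A graph is prime if it has no homogeneous set,
i.e. no module `M` with `1 < |M| < |V(G)|`. -/
def IsPrime {V : Type*} (G : SimpleGraph V) : Prop :=
  ¬ ∃ M : Set V, IsModule G M ∧ 1 < M.ncard ∧ M.ncard < Nat.card V

/-- A nonempty graph is critical if deleting any vertex decreases the chromatic number. -/
def IsCritical {V : Type*} (G : SimpleGraph V) : Prop :=
  Nonempty V ∧ ∀ v : V, (G.induce {u | u ≠ v}).chromaticNumber < G.chromaticNumber

/-- `G` is a `non-empty, 2K₁-free'-expansion of `G'`: the fibres of `f` partition `V(G)`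
into nonempty cliques, with complete/empty bipartite connections according to `G'`. -/
def IsExpansionOf {V W : Type*} (G : SimpleGraph V) (G' : SimpleGraph W) : Prop :=
  ∃ f : V → W, Function.Surjective f ∧
    (∀ u v, u ≠ v → f u = f v → G.Adj u v) ∧
    (∀ u v, f u ≠ f v → (G.Adj u v ↔ G'.Adj (f u) (f v)))

/-- The weighted chromatic number `χ_q(G)`: the least `k` such that every vertex `v`
can be assigned a set of `q v` colours from `{1,…,k}` with disjoint sets on adjacent
vertices. -/
noncomputable def wChromaticNumber {V : Type*} (G : SimpleGraph V) (q : V → ℕ) : ℕ :=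
  sInf {k | ∃ L : V → Finset (Fin k), (∀ v, (L v).card = q v) ∧
    ∀ ⦃u v⦄, G.Adj u v → Disjoint (L u) (L v)}

/-- The weighted clique number `ω_q(G)`: the maximum total weight of a clique. -/
noncomputable def wCliqueNum {V : Type*} (G : SimpleGraph V) (q : V → ℕ) : ℕ :=
  sSup {m | ∃ s : Finset V, G.IsClique (s : Set V) ∧ m = ∑ v ∈ s, q v}

/-- `Q(F)`: a path `u₁u₂u₃u₄` whose third vertex `u₃` has been replaced by a copy of `F`,
each of whose vertices is adjacent to both `u₂` and `u₄`. Here `inr 0 = u₁`, `inr 1 = u₂`,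
`inr 2 = u₄`, and `inl w` are the vertices of the copy of `F`. -/
def QGraph {W : Type*} (F : SimpleGraph W) : SimpleGraph (W ⊕ Fin 3) :=
  SimpleGraph.fromRel (fun a b =>
    (∃ w w', a = Sum.inl w ∧ b = Sum.inl w' ∧ F.Adj w w') ∨
    (a = Sum.inr 0 ∧ b = Sum.inr 1) ∨
    (∃ w, a = Sum.inl w ∧ (b = Sum.inr 1 ∨ b = Sum.inr 2)))

/-- The join of two graphs: all edges of both graphs plus all edges in between. -/
def joinGraph {α β : Type*} (G₁ : SimpleGraph α) (G₂ : SimpleGraph β) :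
    SimpleGraph (α ⊕ β) :=
  SimpleGraph.fromRel (fun a b =>
    (∃ u v, a = Sum.inl u ∧ b = Sum.inl v ∧ G₁.Adj u v) ∨
    (∃ u v, a = Sum.inr u ∧ b = Sum.inr v ∧ G₂.Adj u v) ∨
    (∃ u v, a = Sum.inl u ∧ b = Sum.inr v))

/-- `H` has a spanning complete bipartite subgraph. -/
def HasSpanningCompleteBipartite {α : Type*} (H : SimpleGraph α) : Prop :=
  ∃ A B : Set α, A.Nonempty ∧ B.Nonempty ∧ Disjoint A B ∧ A ∪ B = Set.univ ∧
    ∀ a ∈ A, ∀ b ∈ B, H.Adj a b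

/-- `G'` is a `q`-expansion of `G`: each vertex `u` of `G` is replaced by a clique on
`q u` vertices, joined completely or not at all according to adjacency in `G`. -/
def IsWeightedExpansion {V' V : Type*} (G' : SimpleGraph V') (G : SimpleGraph V)
    (q : V → ℕ) : Prop :=
  ∃ f : V' → V,
    (∀ v : V, Nat.card (f ⁻¹' {v}) = q v) ∧
    (∀ a b : V', a ≠ b → f a = f b → G'.Adj a b) ∧
    (∀ a b : V', f a ≠ f b → (G'.Adj a b ↔ G.Adj (f a) (f b)))

/-- `q` is `⊲`-minimal: no weight function pointwise at most `q` with strictly smaller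
total weight has the same weighted chromatic number. -/
def IsTriMinimal {V : Type*} [Fintype V] (G : SimpleGraph V) (q : V → ℕ) : Prop :=
  ¬ ∃ q' : V → ℕ, (∀ v, q' v ≤ q v) ∧ (∑ v, q' v) < (∑ v, q v) ∧
      wChromaticNumber G q' = wChromaticNumber G q

/-!
Suppose `G[M]` contains `F` and some vertex `z` is at distance two from `M`. Since `M` is a
module, `N(M)` is complete to `M`, and it separates `M` from `z`. If `x, y ∈ N(M)` are distinct
and nonadjacent and `v ∉ M ∪ N(M)` is adjacent to `x` but not to `y`, then `v`, `x`, the copy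
of `F` and `y` induce `Q(F)`. So no vertex outside `N(M)` distinguishes the ends of an edge of
the complement of `G[N(M)]`, which makes every anticomponent of `N(M)` (connected component of
that complement) a module; distinct anticomponents are complete to each other.
-/

lemma indFree_iff_not_isIndContained {α β : Type*} {H : SimpleGraph α} {G : SimpleGraph β} :
    IndFree H G ↔ ¬ H ⊴ G := by
  simp [IndFree, isIndContained_iff_exists_iso_induce]

section QGraph

variable {W : Type*} (F : SimpleGraph W)

@[simp]
lemma qGraph_adj_inl_inl (w w' : W) : (QGraph F).Adj (.inl w) (.inl w') ↔ F.Adj w w' := by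
  simp +contextual [QGraph, F.adj_comm, F.ne_of_adj]

@[simp]
lemma qGraph_adj_inl_inr (w : W) (i : Fin 3) : (QGraph F).Adj (.inl w) (.inr i) ↔ i ≠ 0 := by
  fin_cases i <;> simp [QGraph]

@[simp]
lemma qGraph_adj_inr_inl (i : Fin 3) (w : W) : (QGraph F).Adj (.inr i) (.inl w) ↔ i ≠ 0 := by
  rw [adj_comm, qGraph_adj_inl_inr]

@[simp]
lemma qGraph_adj_inr_inr (i j : Fin 3) :
    (QGraph F).Adj (.inr i) (.inr j) ↔ i = 0 ∧ j = 1 ∨ i = 1 ∧ j = 0 := by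
  fin_cases i <;> fin_cases j <;> simp [QGraph]

end QGraph

lemma qGraph_isIndContained {W V : Type*} {F : SimpleGraph W} {G : SimpleGraph V} (φ : F ↪g G)
    {v a b : V} (hab : a ≠ b) (hnab : ¬ G.Adj a b) (hva : G.Adj v a) (hvb : ¬ G.Adj v b)
    (ha : ∀ w, G.Adj a (φ w)) (hb : ∀ w, G.Adj b (φ w)) (hv : ∀ w, ¬ G.Adj v (φ w))
    (hvφ : v ∉ Set.range φ) :
    QGraph F ⊴ G := by
  have hvb' : v ≠ b := by rintro rfl; exact hnab hva.symm
  refine ⟨⟨⟨Sum.elim φ ![v, a, b], ?_⟩, fun {x y} ↦ ?_⟩⟩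
  · rintro (w | i) (w' | j) h
    · simpa using h
    · fin_cases j <;> simp at h
      · exact absurd ⟨w, h⟩ hvφ
      · exact ((ha w).ne h.symm).elim
      · exact ((hb w).ne h.symm).elim
    · fin_cases i <;> simp at h
      · exact absurd ⟨w', h.symm⟩ hvφ
      · exact ((ha w').ne h).elim
      · exact ((hb w').ne h).elim
    · fin_cases i <;> fin_cases j <;> simp_all [hva.ne, hva.ne.symm, hvb'.symm, hab.symm]
  · change G.Adj (Sum.elim φ ![v, a, b] x) (Sum.elim φ ![v, a, b] y) ↔ _
    rcases x with w | i <;> rcases y with w' | j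
    · simp
    · fin_cases j <;> simp [G.adj_comm, ha, hb, hv]
    · fin_cases i <;> simp [ha, hb, hv]
    · fin_cases i <;> fin_cases j <;> simp [G.adj_comm, hva, hvb, hnab]

namespace SimpleGraph

lemma Reachable.of_adj_imp {α : Type*} {H : SimpleGraph α} {P : α → Prop}
    (hP : ∀ ⦃x y⦄, H.Adj x y → P x → P y) {x y : α} (hxy : H.Reachable x y) (hx : P x) : P y := by
  rw [reachable_iff_reflTransGen] at hxy
  induction hxy with
  | refl => exact hx
  | tail _ hadj ih => exact hP hadj ih

variable {V : Type*} {G : SimpleGraph V} {X : Set V}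

def anticomponent (G : SimpleGraph V) (X : Set V) (c : (G.induce X)ᶜ.ConnectedComponent) :
    Set V :=
  Subtype.val '' c.supp

lemma adj_of_connectedComponentMk_ne {x y : X}
    (h : (G.induce X)ᶜ.connectedComponentMk x ≠ (G.induce X)ᶜ.connectedComponentMk y) :
    G.Adj x y := by
  by_contra hxy
  refine h (ConnectedComponent.sound (Adj.reachable ?_))
  exact (compl_adj _ _ _).2 ⟨fun hne ↦ h (hne ▸ rfl), hxy⟩

lemma adj_of_mem_anticomponent {c c' : (G.induce X)ᶜ.ConnectedComponent} (hcc' : c ≠ c')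
    {x y : V} (hx : x ∈ anticomponent G X c) (hy : y ∈ anticomponent G X c') : G.Adj x y := by
  obtain ⟨x, rfl, rfl⟩ := hx
  obtain ⟨y, rfl, rfl⟩ := hy
  exact adj_of_connectedComponentMk_ne hcc'

lemma disjoint_anticomponent {c c' : (G.induce X)ᶜ.ConnectedComponent} (hcc' : c ≠ c') :
    Disjoint (anticomponent G X c) (anticomponent G X c') :=
  Set.disjoint_left.2 fun _ hx hx' ↦ (adj_of_mem_anticomponent hcc' hx hx').ne rfl

lemma iUnion_anticomponent : ⋃ c, anticomponent G X c = X := by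
  ext x
  simp only [anticomponent, Set.mem_iUnion, Set.mem_image, ConnectedComponent.mem_supp_iff]
  exact ⟨fun ⟨_, y, _, hy⟩ ↦ hy ▸ y.2, fun hx ↦ ⟨_, ⟨x, hx⟩, rfl, rfl⟩⟩

lemma isModule_anticomponent
    (hX : ∀ v ∉ X, ∀ x ∈ X, ∀ y ∈ X, x ≠ y → ¬ G.Adj x y → G.Adj v x → G.Adj v y)
    (c : (G.induce X)ᶜ.ConnectedComponent) : IsModule G (anticomponent G X c) := by
  refine ⟨c.nonempty_supp.image _, fun v hv ↦ ?_⟩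
  by_cases hvX : v ∈ X
  · have hvc : (G.induce X)ᶜ.connectedComponentMk ⟨v, hvX⟩ ≠ c :=
      fun h ↦ hv ⟨⟨v, hvX⟩, h, rfl⟩
    exact .inl fun u hu ↦ adj_of_mem_anticomponent hvc ⟨_, rfl, rfl⟩ hu
  · have hP : ∀ ⦃x y : X⦄, (G.induce X)ᶜ.Adj x y → G.Adj v x → G.Adj v y := by
      intro x y hxy
      rw [compl_adj, comap_adj] at hxy
      exact hX v hvX x x.2 y y.2 (Subtype.coe_ne_coe.2 hxy.1) hxy.2
    have hconst : ∀ x ∈ c.supp, ∀ y ∈ c.supp, G.Adj v x → G.Adj v y := fun x hx y hy ↦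
      (ConnectedComponent.exact (hx.trans hy.symm)).of_adj_imp hP
    by_cases hadj : ∃ x ∈ c.supp, G.Adj v x
    · obtain ⟨x, hx, hvx⟩ := hadj
      exact .inl fun _ ⟨y, hy, hyu⟩ ↦ hyu ▸ hconst x hx y hy hvx
    · simp only [not_exists, not_and] at hadj
      exact .inr fun _ ⟨y, hy, hyu⟩ ↦ hyu ▸ hadj y hy

lemma exists_partition_into_complete_modules [Finite X]
    (hX : ∀ v ∉ X, ∀ x ∈ X, ∀ y ∈ X, x ≠ y → ¬ G.Adj x y → G.Adj v x → G.Adj v y) :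
    ∃ (k : ℕ) (Xs : Fin k → Set V),
      (∀ i, IsModule G (Xs i)) ∧
      (∀ i j, i ≠ j → Disjoint (Xs i) (Xs j)) ∧
      (∀ i j, i ≠ j → ∀ u ∈ Xs i, ∀ v ∈ Xs j, G.Adj u v) ∧
      X = ⋃ i, Xs i := by
  let e := Finite.equivFin (G.induce X)ᶜ.ConnectedComponent
  refine ⟨_, fun i ↦ anticomponent G X (e.symm i), fun i ↦ isModule_anticomponent hX _,
    fun i j hij ↦ disjoint_anticomponent (e.symm.injective.ne hij),
    fun i j hij _ hu _ hv ↦ adj_of_mem_anticomponent (e.symm.injective.ne hij) hu hv, ?_⟩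
  exact iUnion_anticomponent.symm.trans (e.symm.iSup_comp (g := anticomponent G X)).symm

end SimpleGraph

lemma IsModule.adj_of_exists_adj {V : Type*} {G : SimpleGraph V} {M : Set V} (hM : IsModule G M)
    {v u : V} (hv : v ∉ M) (hvM : ∃ u ∈ M, G.Adj v u) (hu : u ∈ M) : G.Adj v u := by
  obtain ⟨u₀, hu₀, hvu₀⟩ := hvM
  exact (hM.2 v hv).resolve_right (fun h ↦ h u₀ hu₀ hvu₀) u hu

lemma exists_separation_neighborhood {V : Type*} {G : SimpleGraph V} {M : Set V}
    (hM : M.Nonempty) {z : V} (hzM : z ∉ M) (hz : ∀ u ∈ M, ¬ G.Adj z u) :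
    ∃ A B : Set V, A ∪ B = Set.univ ∧ (A \ B).Nonempty ∧ (B \ A).Nonempty ∧
      (∀ a ∈ A \ B, ∀ b ∈ B \ A, ¬ G.Adj a b) ∧ A ∩ B = {v | v ∉ M ∧ ∃ u ∈ M, G.Adj v u} := by
  refine ⟨M ∪ {v | v ∉ M ∧ ∃ u ∈ M, G.Adj v u}, Mᶜ, ?_, ?_, ⟨z, hzM, ?_⟩, ?_, ?_⟩
  · exact Set.eq_univ_of_forall fun v ↦ (em (v ∈ M)).imp .inl id
  · obtain ⟨m, hm⟩ := hM
    exact ⟨m, .inl hm, not_not.2 hm⟩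
  · rintro (h | ⟨-, u, hu, hzu⟩)
    exacts [hzM h, hz u hu hzu]
  · rintro a ⟨-, haM⟩ b ⟨hbM, hb⟩ hab
    exact hb (.inr ⟨hbM, a, not_not.1 haM, hab.symm⟩)
  · ext v
    constructor
    · rintro ⟨h | h, hv⟩
      exacts [absurd h hv, h]
    · exact fun h ↦ ⟨.inr h, h.1⟩

theorem stmt12_general {W V : Type} [Fintype V] (F : SimpleGraph W)
    (G : SimpleGraph V)
    (hfree : IndFree (QGraph F) G) (M : Set V) (hM : IsModule G M) :
    IndFree F (G.induce M) ∨
    IsCliqueSeparatorOfModules G {v | v ∉ M ∧ ∃ u ∈ M, G.Adj v u} ∨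
    (∀ v : V, v ∈ M ∨ ∃ u ∈ M, G.Adj v u) := by
  rw [or_iff_not_imp_left, or_iff_not_imp_right]
  intro hF hdom
  obtain ⟨z, hzM, hz⟩ : ∃ z, z ∉ M ∧ ∀ u ∈ M, ¬ G.Adj z u := by simpa using hdom
  obtain ⟨φ⟩ := not_not.1 (indFree_iff_not_isIndContained.not.1 hF)
  let ψ := (Embedding.induce M).comp φ
  have hψM : ∀ w, ψ w ∈ M := fun w ↦ (φ w).2
  set N : Set V := {v | v ∉ M ∧ ∃ u ∈ M, G.Adj v u}
  have hN : ∀ v ∉ N, ∀ x ∈ N, ∀ y ∈ N, x ≠ y → ¬ G.Adj x y → G.Adj v x → G.Adj v y := by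
    intro v hvN x hx y hy hxy hnxy hvx
    by_cases hvM : v ∈ M
    · exact (hM.adj_of_exists_adj hy.1 hy.2 hvM).symm
    by_contra hvy
    refine indFree_iff_not_isIndContained.1 hfree (qGraph_isIndContained ψ hxy hnxy hvx hvy
      (fun w ↦ hM.adj_of_exists_adj hx.1 hx.2 (hψM w))
      (fun w ↦ hM.adj_of_exists_adj hy.1 hy.2 (hψM w))
      (fun w h ↦ hvN ⟨hvM, _, hψM w, h⟩) ?_)
    rintro ⟨w, rfl⟩
    exact hvM (hψM w)
  exact ⟨exists_partition_into_complete_modules hN, exists_separation_neighborhood hM.1 hzM hz⟩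

/-- If `G` is a finite connected `Q(F)`-free graph and `M` is a module of `G`, then
`G[M]` is `F`-free, or `N(M)` is a clique-separator of modules, or `N²(M) = ∅`
(every vertex lies in `M` or has a neighbour in `M`). -/
theorem stmt12 {W V : Type} [Fintype W] [Fintype V] (F : SimpleGraph W)
    (G : SimpleGraph V) (hconn : G.Connected)
    (hfree : IndFree (QGraph F) G) (M : Set V) (hM : IsModule G M) :
    IndFree F (G.induce M) ∨
    IsCliqueSeparatorOfModules G {v | v ∉ M ∧ ∃ u ∈ M, G.Adj v u} ∨
    (∀ v : V, v ∈ M ∨ ∃ u ∈ M, G.Adj v u) :=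
  stmt12_general F G hfree M hM
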